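/- arXiv:2212.02012 — 3 statements merged into one kernel-verified Lean document; each statement's English description precedes it below -/
import Mathlib

section
/- Let T be a bounded linear operator on a complex Hilbert space H with R(T) ⊆ R(T*), and suppose that the restriction T' := T restricted to N(T)⊥ (a bounded operator on the Hilbert space N(T)⊥) is isoloid and that 0 is not in the residual spectrum of T'. Then R(T) is closed if and only if 0 is not a limit point of the spectrum σ(T). -/
/-- The residual spectrum of a bounded operator `S`: the set of `z ∈ ℂ` such that
`S - z I` is injective but does not have dense range. -/
def residualSpectrum {E : Type*} [NormedAddCommGroup E] [NormedSpace ℂ E]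
    (S : E →L[ℂ] E) : Set ℂ :=
  {z | Function.Injective (S - z • (1 : E →L[ℂ] E)) ∧
        ¬ Dense (Set.range (S - z • (1 : E →L[ℂ] E)))}

/-- An operator `S` is isoloid if every isolated point of its spectrum is an
eigenvalue. -/
def Isoloid {E : Type*} [NormedAddCommGroup E] [NormedSpace ℂ E]
    (S : E →L[ℂ] E) : Prop :=
  ∀ z ∈ spectrum ℂ S, ¬ AccPt z (Filter.principal (spectrum ℂ S)) →
    ∃ x : E, x ≠ 0 ∧ S x = z • x


/-!
Write `K = N(T)`. As `T` vanishes on `K` and maps `Kᗮ` into itself, `T = 0 ⊕ T'` on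
`H = K ⊕ Kᗮ`. Hence `R(T) = R(T')` sits in the closed subspace `Kᗮ`, `σ(T') ⊆ σ(T)` and
`σ(T) ⊆ σ(T') ∪ {0}`. Since `T'` is injective and `0` is not in its residual spectrum, its
range is dense, so `R(T)` is closed iff `0 ∉ σ(T')`. If `0 ∉ σ(T')`, a neighbourhood of `0`
misses the closed set `σ(T')`, hence misses `σ(T) \ {0}`. Conversely, if `0` is not a limit
point of `σ(T) ⊇ σ(T')` but `0 ∈ σ(T')`, it is an isolated point of `σ(T')`, hence an
eigenvalue of the isoloid `T'`, contradicting injectivity.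
-/

open Set Filter Topology

theorem not_accPt_of_diff_subset_isClosed {X : Type*} [TopologicalSpace X] {a : X}
    {s t : Set X} (hs : IsClosed s) (ha : a ∉ s) (hts : t \ {a} ⊆ s) :
    ¬ AccPt a (𝓟 t) := by
  rw [accPt_principal_iff_clusterPt, ← mem_closure_iff_clusterPt]
  exact fun h ↦ ha (closure_minimal hts hs h)

section Residual

variable {E : Type*} [NormedAddCommGroup E] [NormedSpace ℂ E]

theorem isClosed_range_iff_isUnit_of_zero_notMem_residualSpectrum [CompleteSpace E]
    {S : E →L[ℂ] E} (hinj : Function.Injective S) (hres : (0 : ℂ) ∉ residualSpectrum S) :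
    IsClosed (range S) ↔ IsUnit S := by
  have hdense : Dense (range S) := by
    by_contra hd
    exact hres ⟨by simpa using hinj, by simpa using hd⟩
  rw [ContinuousLinearMap.isUnit_iff_bijective]
  refine ⟨fun hc ↦ ⟨hinj, ?_⟩, fun hbij ↦ ?_⟩
  · rw [← range_eq_univ, ← hc.closure_eq, hdense.closure_eq]
  · rw [hbij.2.range_eq]
    exact isClosed_univ

theorem Isoloid.accPt_zero_of_injective {S : E →L[ℂ] E} (hS : Isoloid S)
    (hinj : Function.Injective S) (h0 : 0 ∈ spectrum ℂ S) :
    AccPt 0 (𝓟 (spectrum ℂ S)) := by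
  by_contra hacc
  obtain ⟨x, hx0, hx⟩ := hS 0 h0 hacc
  exact hx0 (hinj (by simpa using hx))

end Residual

section Restrict

variable {𝕜 H : Type*} [RCLike 𝕜] [NormedAddCommGroup H] [InnerProductSpace 𝕜 H]
  {K : Submodule 𝕜 H} {T : H →L[𝕜] H} {T' : Kᗮ →L[𝕜] Kᗮ}

theorem injective_restrict (hker : LinearMap.ker (T : H →ₗ[𝕜] H) ≤ K)
    (hT' : ∀ x, (T' x : H) = T x) : Function.Injective T' := by
  refine (injective_iff_map_eq_zero T').2 fun x hx ↦ Subtype.ext ?_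
  have hxK : (x : H) ∈ K := hker (by simp [← hT', hx])
  have hxKK : (x : H) ∈ K ⊓ Kᗮ := Submodule.mem_inf.2 ⟨hxK, x.2⟩
  simpa [K.inf_orthogonal_eq_bot] using hxKK

theorem coe_algebraMap_sub_restrict_apply (hT' : ∀ x, (T' x : H) = T x) (a : 𝕜) (x : Kᗮ) :
    ((algebraMap 𝕜 (Kᗮ →L[𝕜] Kᗮ) a - T') x : H) = (algebraMap 𝕜 (H →L[𝕜] H) a - T) x := by
  simp [Algebra.algebraMap_eq_smul_one, hT']

variable [K.HasOrthogonalProjection]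

theorem apply_eq_restrict_orthogonalProjectionOnto
    (hK : K ≤ LinearMap.ker (T : H →ₗ[𝕜] H)) (hT' : ∀ x, (T' x : H) = T x) (x : H) :
    T x = T' (Kᗮ.orthogonalProjectionOnto x) := by
  conv_lhs => rw [← K.starProjection_add_starProjection_orthogonal x]
  have h0 : T (K.starProjection x) = 0 := hK (K.starProjection_apply_mem x)
  rw [map_add, h0, zero_add, Submodule.starProjection_apply, hT']

theorem range_eq_image_range_restrict (hK : K ≤ LinearMap.ker (T : H →ₗ[𝕜] H))
    (hT' : ∀ x, (T' x : H) = T x) :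
    range T = Subtype.val '' range T' := by
  ext y
  constructor
  · rintro ⟨x, rfl⟩
    exact ⟨_, mem_range_self _, (apply_eq_restrict_orthogonalProjectionOnto hK hT' x).symm⟩
  · rintro ⟨_, ⟨x, rfl⟩, rfl⟩
    exact ⟨x, (hT' x).symm⟩

theorem isClosed_range_iff_isClosed_range_restrict (hK : K ≤ LinearMap.ker (T : H →ₗ[𝕜] H))
    (hT' : ∀ x, (T' x : H) = T x) : IsClosed (range T) ↔ IsClosed (range T') := by
  rw [range_eq_image_range_restrict hK hT']
  have hemb := K.isClosed_orthogonal.isClosedEmbedding_subtypeVal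
  exact hemb.isClosed_iff_image_isClosed.symm

theorem orthogonalProjectionOnto_algebraMap_sub_apply
    (hK : K ≤ LinearMap.ker (T : H →ₗ[𝕜] H)) (hT' : ∀ x, (T' x : H) = T x) (a : 𝕜) (x : H) :
    Kᗮ.orthogonalProjectionOnto ((algebraMap 𝕜 (H →L[𝕜] H) a - T) x) =
      (algebraMap 𝕜 (Kᗮ →L[𝕜] Kᗮ) a - T') (Kᗮ.orthogonalProjectionOnto x) := by
  simp [Algebra.algebraMap_eq_smul_one, apply_eq_restrict_orthogonalProjectionOnto hK hT' x]

variable [CompleteSpace H]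

theorem spectrum_restrict_subset (hK : K ≤ LinearMap.ker (T : H →ₗ[𝕜] H))
    (hT' : ∀ x, (T' x : H) = T x) : spectrum 𝕜 T' ⊆ spectrum 𝕜 T := by
  intro a ha
  contrapose! ha
  rw [spectrum.notMem_iff, ContinuousLinearMap.isUnit_iff_bijective] at ha ⊢
  refine ⟨fun x y hxy ↦ Subtype.ext (ha.1 ?_), fun y ↦ ?_⟩
  · simpa only [← coe_algebraMap_sub_restrict_apply hT'] using congrArg Subtype.val hxy
  · obtain ⟨x, hx⟩ := ha.2 y
    refine ⟨Kᗮ.orthogonalProjectionOnto x, ?_⟩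
    rw [← orthogonalProjectionOnto_algebraMap_sub_apply hK hT', hx,
      Submodule.orthogonalProjectionOnto_mem_subspace_eq_self]

theorem spectrum_diff_zero_subset_restrict (hK : K ≤ LinearMap.ker (T : H →ₗ[𝕜] H))
    (hT' : ∀ x, (T' x : H) = T x) : spectrum 𝕜 T \ {0} ⊆ spectrum 𝕜 T' := by
  rintro a ⟨ha, ha0 : a ≠ 0⟩
  contrapose! ha
  rw [spectrum.notMem_iff, ContinuousLinearMap.isUnit_iff_bijective] at ha ⊢
  refine ⟨(injective_iff_map_eq_zero _).2 fun x hx ↦ ?_, fun y ↦ ?_⟩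
  · have hPx : Kᗮ.orthogonalProjectionOnto x = 0 := ha.1 <| by
      rw [← orthogonalProjectionOnto_algebraMap_sub_apply hK hT', hx, map_zero, map_zero]
    have hTx : T x = 0 := by
      rw [apply_eq_restrict_orthogonalProjectionOnto hK hT', hPx, map_zero, Submodule.coe_zero]
    simpa [Algebra.algebraMap_eq_smul_one, hTx, ha0] using hx
  · obtain ⟨u, hu⟩ := ha.2 (Kᗮ.orthogonalProjectionOnto y)
    have hTK : T (K.starProjection y) = 0 := hK (K.starProjection_apply_mem y)
    refine ⟨a⁻¹ • K.starProjection y + u, ?_⟩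
    rw [map_add, ← coe_algebraMap_sub_restrict_apply hT', hu,
      ← Submodule.starProjection_apply]
    simp [Algebra.algebraMap_eq_smul_one, hTK, ha0]

end Restrict

theorem stmt6_general {H : Type*} [NormedAddCommGroup H] [InnerProductSpace ℂ H] [CompleteSpace H]
    (T : H →L[ℂ] H)
    (T' : (LinearMap.ker (T : H →ₗ[ℂ] H))ᗮ →L[ℂ] (LinearMap.ker (T : H →ₗ[ℂ] H))ᗮ)
    (hT' : ∀ x : (LinearMap.ker (T : H →ₗ[ℂ] H))ᗮ, (T' x : H) = T x)
    (hiso : Isoloid T')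
    (hres : (0 : ℂ) ∉ residualSpectrum T') :
    IsClosed (Set.range T) ↔ ¬ AccPt (0 : ℂ) (Filter.principal (spectrum ℂ T)) := by
  have hinj : Function.Injective T' := injective_restrict le_rfl hT'
  calc IsClosed (range T)
      ↔ IsClosed (range T') := isClosed_range_iff_isClosed_range_restrict le_rfl hT'
    _ ↔ IsUnit T' := isClosed_range_iff_isUnit_of_zero_notMem_residualSpectrum hinj hres
    _ ↔ 0 ∉ spectrum ℂ T' := (spectrum.zero_notMem_iff ℂ).symm
    _ ↔ ¬ AccPt 0 (𝓟 (spectrum ℂ T)) := by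
        refine ⟨fun h0 ↦ not_accPt_of_diff_subset_isClosed (spectrum.isClosed T') h0
          (spectrum_diff_zero_subset_restrict le_rfl hT'), fun hacc h0 ↦ hacc ?_⟩
        exact (hiso.accPt_zero_of_injective hinj h0).mono
          (principal_mono.2 (spectrum_restrict_subset le_rfl hT'))

/-- Corollary 3.2: Let `T` be a posinormal bounded operator (`R(T) ⊆ R(T*)`) on a
complex Hilbert space `H` such that `T' = T|_{N(T)ᗮ}` is isoloid and `0` is not in the
residual spectrum of `T'`.  Then `R(T)` is closed if and only if `0` is not a limit
point of `σ(T)`. -/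
theorem stmt6 {H : Type*} [NormedAddCommGroup H] [InnerProductSpace ℂ H] [CompleteSpace H]
    (T : H →L[ℂ] H)
    (hpos : LinearMap.range (T : H →ₗ[ℂ] H) ≤
      LinearMap.range (ContinuousLinearMap.adjoint T : H →ₗ[ℂ] H))
    (T' : (LinearMap.ker (T : H →ₗ[ℂ] H))ᗮ →L[ℂ] (LinearMap.ker (T : H →ₗ[ℂ] H))ᗮ)
    (hT' : ∀ x : (LinearMap.ker (T : H →ₗ[ℂ] H))ᗮ, (T' x : H) = T x)
    (hiso : Isoloid T')
    (hres : (0 : ℂ) ∉ residualSpectrum T') :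
    IsClosed (Set.range T) ↔ ¬ AccPt (0 : ℂ) (Filter.principal (spectrum ℂ T)) :=
  stmt6_general T T' hT' hiso hres
end

section
/- Let A and B be commuting bounded linear operators on a complex Hilbert space H, both with closed range, satisfying R(A) ⊆ R(A*) and R(B) ⊆ R(B*). Let B' = P ∘ B restricted to N(A)⊥ (the compression of B to N(A)⊥, where P is the orthogonal projection onto N(A)⊥) and let Z = B restricted to N(A). If R(B') ⊆ R(B'*) and R(Z*) ⊆ R(Z), then AB has closed range and R(AB) ⊆ R((AB)*). -/
/-!
Write `K = N(A)`. Since `A` kills `K` and `B` leaves `K` invariant, `AB = A B' P_{Kᗮ}`, so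
`R(AB)` is the image of `R(B')` under `A`, which is bounded below on `Kᗮ`. Hence it suffices that
`R(B')` is closed, i.e. that `R(B'*) = B*(Kᗮ)` is closed. Coposinormality of `Z` and
posinormality of `B` give `N(B*) ⊆ Kᗮ ⊕ (K ∩ N(B*))`, so `Kᗮ + N(B*)` is closed, and its image
`B*(Kᗮ)` under `B*`, which has closed range, is closed. Once `R(AB)` is closed, posinormality of
`AB` amounts to `N(AB) ⊆ N((AB)*)`, which follows from posinormality of `A` and `B'`.
-/

open ContinuousLinearMap Submodule
open scoped InnerProduct

lemma Submodule.isClosed_sup_of_le_orthogonal {𝕜 E : Type*} [RCLike 𝕜] [NormedAddCommGroup E]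
    [InnerProductSpace 𝕜 E] {M S : Submodule 𝕜 E} [M.HasOrthogonalProjection]
    (hS : IsClosed (S : Set E)) (hSM : S ≤ Mᗮ) : IsClosed ((M ⊔ S : Submodule 𝕜 E) : Set E) := by
  suffices ((M ⊔ S : Submodule 𝕜 E) : Set E) = Mᗮ.starProjection ⁻¹' S from
    this ▸ hS.preimage Mᗮ.starProjection.continuous
  ext x
  refine ⟨fun hx ↦ ?_, fun hx ↦ ?_⟩
  · obtain ⟨m, hm, s, hs, rfl⟩ := mem_sup.mp hx
    have hm0 : Mᗮ.starProjection m = 0 :=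
      (starProjection_apply_eq_zero_iff _).mpr (M.le_orthogonal_orthogonal hm)
    rw [Set.mem_preimage, map_add, hm0, zero_add, starProjection_eq_self_iff.mpr (hSM hs)]
    exact hs
  · rw [SetLike.mem_coe, ← starProjection_add_starProjection_orthogonal (K := M) x]
    exact add_mem_sup (starProjection_apply_mem _ _) hx

namespace ContinuousLinearMap

variable {𝕜 E F : Type*} [RCLike 𝕜]
  [NormedAddCommGroup E] [InnerProductSpace 𝕜 E] [NormedAddCommGroup F] [InnerProductSpace 𝕜 F]

lemma image_sup_ker (T : E →L[𝕜] F) (V : Submodule 𝕜 E) :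
    T '' (V ⊔ T.ker : Submodule 𝕜 E) = T '' V := by
  refine subset_antisymm ?_ (Set.image_mono (SetLike.coe_subset_coe.mpr le_sup_left))
  rintro _ ⟨_, hx, rfl⟩
  obtain ⟨v, hv, n, hn, rfl⟩ := mem_sup.mp hx
  have hn0 : T n = 0 := hn
  exact ⟨v, hv, by rw [map_add, hn0, add_zero]⟩

lemma apply_mem_ker_of_commute {A B : E →L[𝕜] E} (hcomm : Commute A B) {x : E}
    (hx : x ∈ A.ker) : B x ∈ A.ker := by
  have hAx : A x = 0 := hx
  change A (B x) = 0
  rw [← comp_apply, ← mul_def, hcomm.eq, mul_def, comp_apply, hAx, map_zero]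

section ClosedRange

variable [CompleteSpace E]

lemma apply_starProjection_orthogonal_ker (T : E →L[𝕜] F) (x : E) :
    T (T.kerᗮ.starProjection x) = T x := by
  have hker : T (T.ker.starProjection x) = 0 := T.ker.starProjection_apply_mem x
  rw [starProjection_orthogonal_val, map_sub, hker, sub_zero]

lemma image_orthogonal_ker (T : E →L[𝕜] F) : T '' (T.kerᗮ : Set E) = Set.range T := by
  refine (Set.image_subset_range _ _).antisymm ?_
  rintro _ ⟨x, rfl⟩
  exact ⟨_, starProjection_apply_mem _ x, apply_starProjection_orthogonal_ker T x⟩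

lemma exists_antilipschitzWith_comp_subtypeL_orthogonal_ker [CompleteSpace F] (T : E →L[𝕜] F)
    (hT : IsClosed (Set.range T)) : ∃ c, AntilipschitzWith c (T ∘L T.kerᗮ.subtypeL) := by
  refine antilipschitz_of_injective_of_isClosed_range _ ?_ ?_
  · refine (injective_iff_map_eq_zero _).mpr fun x hx ↦ ?_
    have : (x : E) ∈ T.ker ⊓ T.kerᗮ := ⟨hx, x.2⟩
    rw [inf_orthogonal_eq_bot, mem_bot] at this
    exact Subtype.ext this
  · rwa [coe_comp, Set.range_comp, coe_subtypeL, Submodule.coe_subtype, Subtype.range_coe,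
      image_orthogonal_ker]

lemma isClosed_image_of_ker_le [CompleteSpace F] (T : E →L[𝕜] F) (hT : IsClosed (Set.range T))
    {V : Submodule 𝕜 E} (hV : IsClosed (V : Set E)) (hker : T.ker ≤ V) :
    IsClosed (T '' V) := by
  obtain ⟨c, hc⟩ := T.exists_antilipschitzWith_comp_subtypeL_orthogonal_ker hT
  have hembed := hc.isClosedEmbedding (T ∘L T.kerᗮ.subtypeL).uniformContinuous
  suffices T '' V = (T ∘L T.kerᗮ.subtypeL) '' (Subtype.val ⁻¹' V) from
    this ▸ hembed.isClosedMap _ (hV.preimage continuous_subtype_val)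
  refine subset_antisymm ?_ (by rintro _ ⟨x, hx, rfl⟩; exact ⟨x, hx, rfl⟩)
  rintro _ ⟨x, hx, rfl⟩
  refine ⟨⟨_, starProjection_apply_mem _ x⟩, ?_, apply_starProjection_orthogonal_ker T x⟩
  change T.kerᗮ.starProjection x ∈ V
  rw [starProjection_orthogonal_val]
  exact V.sub_mem hx (hker (starProjection_apply_mem _ x))

/-- Half of the closed range theorem. `T† T` is bounded below on `(ker T)ᗮ = (ker T† T)ᗮ`, so its
range is closed; and it lies between `range T†` and the closure of `range T†`. -/
theorem isClosed_range_adjoint [CompleteSpace F] (T : E →L[𝕜] F) (hT : IsClosed (Set.range T)) :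
    IsClosed (Set.range (T†)) := by
  obtain ⟨c, hc⟩ := T.exists_antilipschitzWith_comp_subtypeL_orthogonal_ker hT
  have hbound : ∀ x : T.kerᗮ, ‖x‖ ≤ (c ^ 2 : NNReal) * ‖(T† ∘L T ∘L T.kerᗮ.subtypeL) x‖ := by
    intro x
    have h1 := (T ∘L T.kerᗮ.subtypeL).bound_of_antilipschitz hc x
    have h2 : ‖T x‖ ^ 2 ≤ ‖(T† ∘L T) x‖ * ‖x‖ := by
      rw [apply_norm_sq_eq_inner_adjoint_left]
      exact (RCLike.re_le_norm _).trans (norm_inner_le_norm _ _)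
    simp only [coe_comp, Function.comp_apply, coe_subtypeL, Submodule.coe_subtype] at h1 ⊢
    rw [comp_apply] at h2
    push_cast
    rcases (norm_nonneg x).eq_or_lt with h0 | hpos
    · rw [← h0]; positivity
    · nlinarith
  have hclosed : IsClosed ((T† ∘L T).range : Set E) := by
    have := ((T† ∘L T ∘L T.kerᗮ.subtypeL).antilipschitz_of_bound hbound).isClosed_range
      (T† ∘L T ∘L T.kerᗮ.subtypeL).uniformContinuous
    rwa [← comp_assoc, coe_comp, Set.range_comp, coe_subtypeL, Submodule.coe_subtype,
      Subtype.range_coe, ← ker_adjoint_comp_self, image_orthogonal_ker, ← coe_coe,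
      ← LinearMap.coe_range] at this
  have hrange : (T†).range = (T† ∘L T).range := by
    refine le_antisymm ?_ (LinearMap.range_comp_le_range _ _)
    calc (T†).range
        ≤ ((T†).range).topologicalClosure := le_topologicalClosure _
      _ = T.kerᗮ := T.orthogonal_ker.symm
      _ = ((T† ∘L T)†).range.topologicalClosure := by
        rw [← ker_adjoint_comp_self, orthogonal_ker]
      _ = (T† ∘L T).range := by
        rw [adjoint_comp, adjoint_adjoint, hclosed.submodule_topologicalClosure_eq]
  rw [← coe_coe, ← LinearMap.coe_range, hrange]
  exact hclosed

end ClosedRange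

section Posinormal

variable [CompleteSpace E]

def IsPosinormal (T : E →L[𝕜] E) : Prop :=
  LinearMap.range (T : E →ₗ[𝕜] E) ≤ LinearMap.range (T† : E →ₗ[𝕜] E)

def IsCoposinormal (T : E →L[𝕜] E) : Prop :=
  LinearMap.range (T† : E →ₗ[𝕜] E) ≤ LinearMap.range (T : E →ₗ[𝕜] E)

lemma IsPosinormal.ker_le_ker_adjoint {T : E →L[𝕜] E} (hT : T.IsPosinormal) :
    T.ker ≤ (T†).ker := by
  calc T.ker = (T†).rangeᗮ := by rw [orthogonal_range, adjoint_adjoint]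
    _ ≤ T.rangeᗮ := orthogonal_le hT
    _ = (T†).ker := T.orthogonal_range

lemma IsCoposinormal.ker_adjoint_le_ker {T : E →L[𝕜] E} (hT : T.IsCoposinormal) :
    (T†).ker ≤ T.ker := by
  have hT' : (T†).IsPosinormal := by rwa [IsPosinormal, adjoint_adjoint]
  simpa only [adjoint_adjoint] using hT'.ker_le_ker_adjoint

lemma isPosinormal_of_ker_le_ker_adjoint {T : E →L[𝕜] E} (hT : IsClosed (Set.range T))
    (h : T.ker ≤ (T†).ker) : T.IsPosinormal := by
  have hclosed : IsClosed ((T†).range : Set E) := by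
    rw [LinearMap.coe_range, coe_coe]; exact T.isClosed_range_adjoint hT
  calc T.range ≤ T.rangeᗮᗮ := le_orthogonal_orthogonal _
    _ = (T†).kerᗮ := by rw [orthogonal_range]
    _ ≤ T.kerᗮ := orthogonal_le h
    _ = (T†).range := by rw [orthogonal_ker, hclosed.submodule_topologicalClosure_eq]

end Posinormal

section Compression

noncomputable def compression (T : E →L[𝕜] E) (U : Submodule 𝕜 E) [CompleteSpace U] :
    U →L[𝕜] U :=
  U.orthogonalProjectionOnto ∘L T ∘L U.subtypeL

variable {T : E →L[𝕜] E} {U : Submodule 𝕜 E}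

lemma adjoint_apply_mem_orthogonal [CompleteSpace E] (hT : ∀ x ∈ U, T x ∈ U) {y : E}
    (hy : y ∈ Uᗮ) : (T†) y ∈ Uᗮ := by
  intro k hk
  rw [adjoint_inner_right]
  exact hy _ (hT k hk)

variable [CompleteSpace U]

lemma coe_compression_apply (x : U) : (T.compression U x : E) = U.starProjection (T x) := rfl

lemma adjoint_compression [CompleteSpace E] : (T.compression U)† = (T†).compression U := by
  simp only [compression, adjoint_comp, adjoint_subtypeL, adjoint_orthogonalProjectionOnto,
    comp_assoc]

lemma eq_compression_of_sub_mem_orthogonal {T' : U →L[𝕜] U} (h : ∀ x : U, T x - T' x ∈ Uᗮ) :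
    T' = T.compression U := by
  ext x
  exact (eq_starProjection_of_mem_orthogonal (T' x).2 (h x)).symm

lemma coe_compression_apply_of_mapsTo (hT : ∀ x ∈ U, T x ∈ U) (x : U) :
    (T.compression U x : E) = T x := by
  rw [coe_compression_apply, starProjection_eq_self_iff.mpr (hT x x.2)]

end Compression

section Reduction

variable [CompleteSpace E] {B : E →L[𝕜] E} {K : Submodule 𝕜 E} [CompleteSpace K]

lemma ker_adjoint_le_sup_inf (hBK : ∀ x ∈ K, B x ∈ K) (hB : B.IsPosinormal)
    (hZ : (B.compression K).IsCoposinormal) : (B†).ker ≤ Kᗮ ⊔ (K ⊓ (B†).ker) := by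
  intro x hx
  set k := K.orthogonalProjectionOnto x
  have hB'k : (B†) k ∈ Kᗮ := by
    have hsplit : (B†) k = -(B†) (x - k) := by
      have hx0 : (B†) x = 0 := hx
      rw [map_sub, hx0, zero_sub, neg_neg]
    rw [hsplit]
    exact neg_mem (adjoint_apply_mem_orthogonal hBK (sub_starProjection_mem_orthogonal x))
  have hZk : ((B.compression K)†) k = 0 := by
    ext
    rw [adjoint_compression, coe_compression_apply, ZeroMemClass.coe_zero,
      starProjection_apply_eq_zero_iff]
    exact hB'k
  have hBk : B k = 0 := by
    have hZk' : B.compression K k = 0 := hZ.ker_adjoint_le_ker hZk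
    rw [← coe_compression_apply_of_mapsTo hBK, hZk', ZeroMemClass.coe_zero]
  rw [← starProjection_add_starProjection_orthogonal (K := K) x, add_comm]
  exact add_mem_sup (starProjection_apply_mem _ _) ⟨k.2, hB.ker_le_ker_adjoint hBk⟩

theorem isClosed_range_compression_orthogonal (hBK : ∀ x ∈ K, B x ∈ K) (hB : B.IsPosinormal)
    (hBran : IsClosed (Set.range B)) (hZ : (B.compression K).IsCoposinormal) :
    IsClosed (Set.range (B.compression Kᗮ)) := by
  have hsup : Kᗮ ⊔ (B†).ker = Kᗮ ⊔ (K ⊓ (B†).ker) :=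
    le_antisymm (sup_le le_sup_left (ker_adjoint_le_sup_inf hBK hB hZ))
      (sup_le_sup_left inf_le_right _)
  have hsup_closed : IsClosed ((Kᗮ ⊔ (B†).ker : Submodule 𝕜 E) : Set E) := by
    rw [hsup]
    refine isClosed_sup_of_le_orthogonal ?_ (inf_le_left.trans K.le_orthogonal_orthogonal)
    rw [coe_inf, ← K.orthogonal_orthogonal]
    exact Kᗮ.isClosed_orthogonal.inter (B†).isClosed_ker
  have himage_closed : IsClosed ((B†) '' Kᗮ) := by
    rw [← image_sup_ker]
    exact isClosed_image_of_ker_le _ (B.isClosed_range_adjoint hBran) hsup_closed le_sup_right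
  have hcoe : Subtype.val ∘ (B†).compression Kᗮ = (B†) ∘ Subtype.val :=
    funext (coe_compression_apply_of_mapsTo fun _ ↦ adjoint_apply_mem_orthogonal hBK)
  have hrange : Set.range ((B.compression Kᗮ)†) = Subtype.val ⁻¹' ((B†) '' Kᗮ) := by
    rw [adjoint_compression, ← Set.preimage_image_eq (Set.range _) Subtype.val_injective,
      ← Set.range_comp, hcoe, Set.range_comp, Subtype.range_coe]
  have := isClosed_range_adjoint _ (hrange ▸ himage_closed.preimage continuous_subtype_val)
  rwa [adjoint_adjoint] at this

end Reduction

section Commuting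

variable [CompleteSpace E] {A B : E →L[𝕜] E}

lemma comp_eq_comp_compression (hcomm : Commute A B) :
    A ∘L B = A ∘L A.kerᗮ.subtypeL ∘L B.compression A.kerᗮ ∘L A.kerᗮ.orthogonalProjectionOnto := by
  ext x
  have hker : A (B (A.ker.starProjection x)) = 0 :=
    apply_mem_ker_of_commute hcomm (starProjection_apply_mem _ x)
  change A (B x) = A (A.kerᗮ.starProjection (B (A.kerᗮ.starProjection x)))
  rw [apply_starProjection_orthogonal_ker]
  conv_lhs => rw [← starProjection_add_starProjection_orthogonal (K := A.ker) x]
  rw [map_add, map_add, hker, zero_add]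

lemma isClosed_range_comp_of_commute (hcomm : Commute A B) (hA : IsClosed (Set.range A))
    (hB' : IsClosed (Set.range (B.compression A.kerᗮ))) : IsClosed (Set.range (A ∘L B)) := by
  obtain ⟨c, hc⟩ := A.exists_antilipschitzWith_comp_subtypeL_orthogonal_ker hA
  have hP : Function.Surjective A.kerᗮ.orthogonalProjectionOnto := fun v ↦
    ⟨v, orthogonalProjectionOnto_mem_subspace_eq_self v⟩
  rw [comp_eq_comp_compression hcomm, ← comp_assoc, coe_comp, coe_comp, coe_comp,
    Set.range_comp, hP.range_comp]
  exact (hc.isClosedEmbedding (A ∘L A.kerᗮ.subtypeL).uniformContinuous).isClosedMap _ hB'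

lemma ker_comp_le_ker_adjoint_comp (hcomm : Commute A B) (hA : A.IsPosinormal)
    (hB' : (B.compression A.kerᗮ).IsPosinormal) : (A ∘L B).ker ≤ ((A ∘L B)†).ker := by
  intro y hy
  set p := A.kerᗮ.orthogonalProjectionOnto y
  have hB'p : B.compression A.kerᗮ p = 0 := by
    have hA0 : (B.compression A.kerᗮ p : E) ∈ A.ker := by
      change (A ∘L B) y = 0 at hy
      rwa [comp_eq_comp_compression hcomm] at hy
    have : (B.compression A.kerᗮ p : E) ∈ A.ker ⊓ A.kerᗮ := ⟨hA0, (B.compression _ p).2⟩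
    rw [inf_orthogonal_eq_bot, mem_bot] at this
    exact Subtype.ext this
  have hBp : (B†) p = 0 := by
    have : ((B.compression A.kerᗮ)†) p = 0 := hB'.ker_le_ker_adjoint hB'p
    rw [← coe_compression_apply_of_mapsTo fun _ ↦ adjoint_apply_mem_orthogonal
      fun _ ↦ apply_mem_ker_of_commute hcomm, ← adjoint_compression,
      this, ZeroMemClass.coe_zero]
  have hAp : (A†) y = (A†) p := by
    have : (A†) (A.ker.starProjection y) = 0 :=
      hA.ker_le_ker_adjoint (starProjection_apply_mem _ y)
    rw [coe_orthogonalProjectionOnto_apply, starProjection_orthogonal_val, map_sub, this,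
      sub_zero]
  change ((A ∘L B)†) y = 0
  rw [adjoint_comp, comp_apply, hAp, ← comp_apply, ← adjoint_comp, ← mul_def, hcomm.eq,
    mul_def, adjoint_comp, comp_apply, hBp, map_zero]

end Commuting

end ContinuousLinearMap

/-- Corollary 4.3: Let `A`, `B` be commuting posinormal bounded operators with closed
range on a complex Hilbert space `H` (`R(A) ⊆ R(A*)`, `R(B) ⊆ R(B*)`).  Let `B'` be
the compression of `B` to `N(A)ᗮ` (so `B x - B' x ∈ N(A)` for `x ∈ N(A)ᗮ`) and let
`Z = B|_{N(A)}`.  If `B'` is posinormal (`R(B') ⊆ R(B'*)`) and `Z` is coposinormal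
(`R(Z*) ⊆ R(Z)`), then `AB` has closed range and is posinormal. -/
theorem stmt13 {H : Type*} [NormedAddCommGroup H] [InnerProductSpace ℂ H] [CompleteSpace H]
    (A B : H →L[ℂ] H) (hcomm : A ∘L B = B ∘L A)
    (hAran : IsClosed (Set.range A)) (hBran : IsClosed (Set.range B))
    (hA : LinearMap.range (A : H →ₗ[ℂ] H) ≤ LinearMap.range (ContinuousLinearMap.adjoint A : H →ₗ[ℂ] H))
    (hB : LinearMap.range (B : H →ₗ[ℂ] H) ≤ LinearMap.range (ContinuousLinearMap.adjoint B : H →ₗ[ℂ] H))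
    (B' : (LinearMap.ker (A : H →ₗ[ℂ] H))ᗮ →L[ℂ] (LinearMap.ker (A : H →ₗ[ℂ] H))ᗮ)
    (hB' : ∀ x : (LinearMap.ker (A : H →ₗ[ℂ] H))ᗮ, B x - (B' x : H) ∈ LinearMap.ker (A : H →ₗ[ℂ] H))
    (Z : LinearMap.ker (A : H →ₗ[ℂ] H) →L[ℂ] LinearMap.ker (A : H →ₗ[ℂ] H))
    (hZ : ∀ x : LinearMap.ker (A : H →ₗ[ℂ] H), (Z x : H) = B x)
    (hB'pos : LinearMap.range (B' : (LinearMap.ker (A : H →ₗ[ℂ] H))ᗮ →ₗ[ℂ] (LinearMap.ker (A : H →ₗ[ℂ] H))ᗮ) ≤ LinearMap.range (ContinuousLinearMap.adjoint B' : (LinearMap.ker (A : H →ₗ[ℂ] H))ᗮ →ₗ[ℂ] (LinearMap.ker (A : H →ₗ[ℂ] H))ᗮ))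
    (hZco : LinearMap.range (ContinuousLinearMap.adjoint Z : LinearMap.ker (A : H →ₗ[ℂ] H) →ₗ[ℂ] LinearMap.ker (A : H →ₗ[ℂ] H)) ≤ LinearMap.range (Z : LinearMap.ker (A : H →ₗ[ℂ] H) →ₗ[ℂ] LinearMap.ker (A : H →ₗ[ℂ] H))) :
    IsClosed (Set.range (A ∘L B)) ∧
      LinearMap.range (A ∘L B : H →ₗ[ℂ] H) ≤ LinearMap.range (ContinuousLinearMap.adjoint (A ∘L B) : H →ₗ[ℂ] H) := by
  have hcomm' : Commute A B := hcomm
  have hBK : ∀ x ∈ A.ker, B x ∈ A.ker := fun _ ↦ apply_mem_ker_of_commute hcomm'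
  obtain rfl : B' = B.compression A.kerᗮ :=
    eq_compression_of_sub_mem_orthogonal (by simpa only [orthogonal_orthogonal] using hB')
  obtain rfl : Z = B.compression A.ker :=
    eq_compression_of_sub_mem_orthogonal fun x ↦ by rw [hZ, sub_self]; exact zero_mem _
  have hclosed : IsClosed (Set.range (A ∘L B)) :=
    isClosed_range_comp_of_commute hcomm' hAran
      (isClosed_range_compression_orthogonal hBK hB hBran hZco)
  exact ⟨hclosed,
    isPosinormal_of_ker_le_ker_adjoint hclosed (ker_comp_le_ker_adjoint_comp hcomm' hA hB'pos)⟩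
end

section
/- Let A and B be bounded linear operators on a complex Hilbert space H, both with closed range, satisfying R(A) ⊆ R(A*) and R(B) ⊆ R(B*). If N(A) = N(B), then the product AB has closed range and R(AB) ⊆ R((AB)*). -/
/-!
If `T` has closed range, its restriction to `N(T)ᗮ` is injective with the same closed range,
so it is bounded below and has a bounded left inverse. Its adjoint, which is `T*` followed by the
projection onto `N(T)ᗮ`, is therefore onto `N(T)ᗮ`; as `R(T*) ⊆ N(T)ᗮ`, this gives
`N(T)ᗮ ⊆ R(T*)`.

Posinormality of `B` gives `R(B) ⊆ R(B*) ⊆ N(B)ᗮ = N(A)ᗮ`. As `A` is bounded below on `N(A)ᗮ`,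
it maps the closed subspace `R(B)` onto a closed set, so `R(AB)` is closed; and `R(B) ∩ N(A) = 0`
gives `N(AB) = N(B) = N(A)`. Hence `R(AB) ⊆ R(A) ⊆ N(A)ᗮ = N(AB)ᗮ ⊆ R((AB)*)`.
-/

open ContinuousLinearMap InnerProduct

namespace ContinuousLinearMap

variable {𝕜 E F G : Type*} [RCLike 𝕜]
  [NormedAddCommGroup E] [InnerProductSpace 𝕜 E]
  [NormedAddCommGroup F] [InnerProductSpace 𝕜 F]
  [NormedAddCommGroup G] [InnerProductSpace 𝕜 G]

theorem injective_comp_subtypeL_orthogonal_ker (T : E →L[𝕜] F) :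
    Function.Injective (T ∘L T.kerᗮ.subtypeL) := by
  refine (injective_iff_map_eq_zero _).2 fun x hx ↦ Subtype.ext ?_
  exact (Submodule.mem_bot 𝕜).1 (T.ker.orthogonal_disjoint.le_bot ⟨hx, x.2⟩)

theorem range_comp_subtypeL_orthogonal_ker [CompleteSpace E] (T : E →L[𝕜] F) :
    Set.range (T ∘L T.kerᗮ.subtypeL) = Set.range T := by
  refine subset_antisymm (by rintro _ ⟨x, rfl⟩; exact ⟨x, rfl⟩) ?_
  rintro _ ⟨x, rfl⟩
  obtain ⟨u, hu, v, hv, rfl⟩ := T.ker.exists_add_mem_mem_orthogonal x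
  have hu0 : T u = 0 := hu
  exact ⟨⟨v, hv⟩, by simp [hu0]⟩

theorem isClosed_image_of_subset_orthogonal_ker [CompleteSpace E] [CompleteSpace F]
    {T : E →L[𝕜] F} (hT : IsClosed (Set.range T)) {S : Set E} (hS : IsClosed S)
    (hST : S ⊆ T.kerᗮ) : IsClosed (T '' S) := by
  rw [← range_comp_subtypeL_orthogonal_ker] at hT
  obtain ⟨K, hK⟩ := antilipschitz_of_injective_of_isClosed_range _
    (injective_comp_subtypeL_orthogonal_ker T) hT
  have hS' : T '' S = (T ∘L T.kerᗮ.subtypeL) '' (Subtype.val ⁻¹' S) := by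
    rw [coe_comp, Set.image_comp, Submodule.coe_subtypeL, Submodule.coe_subtype,
      Set.image_preimage_eq_of_subset (by simpa using hST)]
  rw [hS']
  exact (hK.isClosedEmbedding (ContinuousLinearMap.uniformContinuous _)).isClosedMap _
    (hS.preimage continuous_subtype_val)

theorem isClosed_range_comp_of_range_le_orthogonal_ker [CompleteSpace F] [CompleteSpace G]
    {A : F →L[𝕜] G} {B : E →L[𝕜] F} (hA : IsClosed (Set.range A))
    (hB : IsClosed (Set.range B)) (hBA : B.range ≤ A.kerᗮ) :
    IsClosed (Set.range (A ∘L B)) := by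
  rw [coe_comp, Set.range_comp]
  exact isClosed_image_of_subset_orthogonal_ker hA hB hBA

theorem ker_comp_eq_of_range_le_orthogonal_ker {A : F →L[𝕜] G} {B : E →L[𝕜] F}
    (hBA : B.range ≤ A.kerᗮ) : (A ∘L B).ker = B.ker := by
  ext x
  refine ⟨fun hx ↦ ?_, fun hx ↦ ?_⟩
  · exact (Submodule.mem_bot 𝕜).1 (A.ker.orthogonal_disjoint.le_bot ⟨hx, hBA ⟨x, rfl⟩⟩)
  · have hx0 : B x = 0 := hx
    simp [hx0]

theorem range_adjoint_le_orthogonal_ker [CompleteSpace E] [CompleteSpace F] (T : E →L[𝕜] F) :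
    T†.range ≤ T.kerᗮ := by
  rw [orthogonal_ker]
  exact Submodule.le_topologicalClosure _

theorem surjective_adjoint_of_injective_of_isClosed_range [CompleteSpace E] [CompleteSpace F]
    {T : E →L[𝕜] F} (hinj : Function.Injective T) (hT : IsClosed (Set.range T)) :
    Function.Surjective (T† : F →L[𝕜] E) := by
  have : CompleteSpace T.range := hT.completeSpace_coe
  have hL : T.HasLeftInverse :=
    .of_injective_of_isClosed_range_of_closedComplement_range hinj hT
      (.of_isCompl_isClosed (Submodule.isCompl_orthogonal _) hT (Submodule.isClosed_orthogonal _))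
  have hid : hL.leftInverse ∘L T = .id 𝕜 E := ext hL.leftInverse_leftInverse
  intro x
  refine ⟨adjoint hL.leftInverse x, ?_⟩
  rw [← comp_apply, ← adjoint_comp, hid, adjoint_id, id_apply]

theorem orthogonal_ker_le_range_adjoint [CompleteSpace E] [CompleteSpace F] {T : E →L[𝕜] F}
    (hT : IsClosed (Set.range T)) : T.kerᗮ ≤ T†.range := by
  intro y hy
  rw [← range_comp_subtypeL_orthogonal_ker] at hT
  obtain ⟨z, hz⟩ := surjective_adjoint_of_injective_of_isClosed_range
    (injective_comp_subtypeL_orthogonal_ker T) hT ⟨y, hy⟩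
  rw [adjoint_comp, Submodule.adjoint_subtypeL, comp_apply] at hz
  have hz' := congrArg Subtype.val hz
  -- `T* z` already lies in `N(T)ᗮ`, so projecting it onto `N(T)ᗮ` does nothing.
  rw [← Submodule.starProjection_apply, Submodule.starProjection_eq_self_iff.2 ?mem] at hz'
  · exact ⟨z, hz'⟩
  · exact range_adjoint_le_orthogonal_ker T ⟨z, rfl⟩

end ContinuousLinearMap

/-- Proposition 4.5: If `A` and `B` are posinormal bounded operators with closed range
on a complex Hilbert space `H` (`R(A) ⊆ R(A*)`, `R(B) ⊆ R(B*)`) and `N(A) = N(B)`,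
then `AB` has closed range and is posinormal (`R(AB) ⊆ R((AB)*)`). -/
theorem stmt14 {H : Type*} [NormedAddCommGroup H] [InnerProductSpace ℂ H] [CompleteSpace H]
    (A B : H →L[ℂ] H)
    (hAran : IsClosed (Set.range A)) (hBran : IsClosed (Set.range B))
    (hA : LinearMap.range (A : H →ₗ[ℂ] H) ≤ LinearMap.range ((ContinuousLinearMap.adjoint A : H →L[ℂ] H) : H →ₗ[ℂ] H))
    (hB : LinearMap.range (B : H →ₗ[ℂ] H) ≤ LinearMap.range ((ContinuousLinearMap.adjoint B : H →L[ℂ] H) : H →ₗ[ℂ] H))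
    (hker : LinearMap.ker (A : H →ₗ[ℂ] H) = LinearMap.ker (B : H →ₗ[ℂ] H)) :
    IsClosed (Set.range (A ∘L B)) ∧
      LinearMap.range ((A ∘L B : H →L[ℂ] H) : H →ₗ[ℂ] H) ≤ LinearMap.range ((ContinuousLinearMap.adjoint (A ∘L B) : H →L[ℂ] H) : H →ₗ[ℂ] H) := by
  have hBA : B.range ≤ A.kerᗮ := hker ▸ hB.trans B.range_adjoint_le_orthogonal_ker
  have hclosed := isClosed_range_comp_of_range_le_orthogonal_ker hAran hBran hBA
  refine ⟨hclosed, ?_⟩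
  calc (A ∘L B).range ≤ A.range := LinearMap.range_comp_le_range _ _
    _ ≤ A.kerᗮ := hA.trans A.range_adjoint_le_orthogonal_ker
    _ = (A ∘L B).kerᗮ := by rw [ker_comp_eq_of_range_le_orthogonal_ker hBA, hker]
    _ ≤ (A ∘L B)†.range := orthogonal_ker_le_range_adjoint hclosed
end
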